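/- Let K be a positive integer, let D = diag(d₁,…,d_K) with d₁,…,d_K > 0, and let M ∈ ℝ^{K×K} be symmetric. Then there exists t₀ > 0 such that D + t M is symmetric positive definite for all real t with |t| < t₀, and for every i, j ∈ {1,…,K}, lim_{t→0} [ ((D + t M)^{1/2})_{ij} − (D^{1/2})_{ij} ] / t = M_{ij} / ( d_i^{1/2} + d_j^{1/2} ). -/

import Mathlib

/-! Write `S = (D + tM)^{1/2}`, `R = D^{1/2}` and `E = S - R`, so that
`S E + E R = S² - R² = tM`. Pairing this Sylvester equation with `E` in the trace inner
product, the positivity of `S` and `R ≥ b` (with `b² = min dᵢ`) give `b ‖E‖ ≤ |t| ‖M‖` in the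
Frobenius norm. Entrywise the equation reads `(√dᵢ + √dⱼ) Eᵢⱼ = t Mᵢⱼ - (E²)ᵢⱼ`, and
`|(E²)ᵢⱼ| ≤ ‖E‖² = O(t²)`. -/

open Matrix Filter

open Classical in
/-- The symmetric positive semidefinite square root of a real matrix, extended by `0`
to matrices that are not positive semidefinite. -/
noncomputable def msqrt {K : ℕ} (A : Matrix (Fin K) (Fin K) ℝ) : Matrix (Fin K) (Fin K) ℝ :=
  if h : A.PosSemidef then
    (h.1.eigenvectorUnitary : Matrix (Fin K) (Fin K) ℝ) *
      diagonal (fun i => Real.sqrt (h.1.eigenvalues i)) *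
      (star h.1.eigenvectorUnitary : Matrix (Fin K) (Fin K) ℝ)
  else 0

attribute [local instance] Matrix.frobeniusNormedAddCommGroup Matrix.frobeniusNormedSpace

namespace Matrix
variable {m n : Type*} [Fintype m] [Fintype n]

theorem frobenius_norm_eq_norm_toLp (A : Matrix m n ℝ) :
    ‖A‖ = ‖WithLp.toLp 2 fun i => WithLp.toLp 2 (A i)‖ := rfl

theorem frobenius_norm_sq_eq_sum (A : Matrix m n ℝ) : ‖A‖ ^ 2 = ∑ i, ∑ j, A i j ^ 2 := by
  simp [frobenius_norm_eq_norm_toLp, PiLp.norm_sq_eq_of_L2]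

theorem abs_sum_mul_le_frobenius_norm_mul (A B : Matrix m n ℝ) :
    |∑ i, ∑ j, A i j * B i j| ≤ ‖A‖ * ‖B‖ := by
  simpa [frobenius_norm_eq_norm_toLp, PiLp.inner_apply, mul_comm] using
    abs_real_inner_le_norm (WithLp.toLp 2 fun i => WithLp.toLp 2 (A i))
      (WithLp.toLp 2 fun i => WithLp.toLp 2 (B i))

theorem abs_apply_le_frobenius_norm (A : Matrix m n ℝ) (i : m) (j : n) : |A i j| ≤ ‖A‖ := by
  refine abs_le_of_sq_le_sq ?_ (norm_nonneg A)
  rw [frobenius_norm_sq_eq_sum]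
  exact (Finset.single_le_sum (fun c _ => sq_nonneg _) (Finset.mem_univ j)).trans
    (Finset.single_le_sum (f := fun a => ∑ c, A a c ^ 2) (fun a _ => by positivity)
      (Finset.mem_univ i))

theorem trace_transpose_mul_eq_sum (A B : Matrix m n ℝ) :
    (Aᵀ * B).trace = ∑ i, ∑ j, A i j * B i j := by
  rw [trace, Finset.sum_comm]
  simp [mul_apply]

theorem frobenius_norm_sq_eq_trace (A : Matrix m n ℝ) : ‖A‖ ^ 2 = (Aᵀ * A).trace := by
  rw [frobenius_norm_sq_eq_sum, trace_transpose_mul_eq_sum]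
  simp only [sq]

theorem frobenius_norm_vecMulVec_le (x : m → ℝ) (y : n → ℝ) :
    ‖vecMulVec x y‖ ≤ ‖WithLp.toLp 2 x‖ * ‖WithLp.toLp 2 y‖ := by
  simpa [vecMulVec_eq Unit] using frobenius_norm_mul (replicateCol Unit x) (replicateRow Unit y)

theorem abs_dotProduct_mulVec_le (A : Matrix n n ℝ) (x : n → ℝ) :
    |x ⬝ᵥ A *ᵥ x| ≤ ‖A‖ * (x ⬝ᵥ x) := by
  have hx : ‖WithLp.toLp 2 x‖ ^ 2 = x ⬝ᵥ x := by
    rw [PiLp.norm_sq_eq_of_L2]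
    simp [dotProduct, sq]
  have hq : x ⬝ᵥ A *ᵥ x = ∑ i, ∑ j, A i j * vecMulVec x x i j := by
    simp only [dotProduct, mulVec, vecMulVec_apply, Finset.mul_sum]
    exact Finset.sum_congr rfl fun i _ => Finset.sum_congr rfl fun j _ => by ring
  rw [hq, ← hx, sq]
  exact (abs_sum_mul_le_frobenius_norm_mul A _).trans
    (mul_le_mul_of_nonneg_left (frobenius_norm_vecMulVec_le x x) (norm_nonneg A))

theorem posDef_diagonal_add_smul {d : n → ℝ} {M : Matrix n n ℝ} {c t : ℝ} [DecidableEq n]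
    (hM : M.IsHermitian) (hc : ∀ i, c ≤ d i) (ht : |t| * ‖M‖ < c) :
    (diagonal d + t • M).PosDef := by
  refine .of_dotProduct_mulVec_pos ((isHermitian_diagonal d).add ?_) fun x hx => ?_
  · exact hM.smul (IsSelfAdjoint.all t)
  have hxx : 0 < x ⬝ᵥ x :=
    (Finset.sum_nonneg fun i _ => mul_self_nonneg (x i)).lt_of_ne'
      (dotProduct_self_eq_zero.not.mpr hx)
  have hD : c * (x ⬝ᵥ x) ≤ x ⬝ᵥ diagonal d *ᵥ x := by
    simp only [dotProduct, mulVec_diagonal, Finset.mul_sum]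
    exact Finset.sum_le_sum fun i _ => by nlinarith [hc i, mul_self_nonneg (x i)]
  have hMx : |t * (x ⬝ᵥ M *ᵥ x)| ≤ |t| * ‖M‖ * (x ⬝ᵥ x) := by
    rw [abs_mul, mul_assoc]
    exact mul_le_mul_of_nonneg_left (abs_dotProduct_mulVec_le M x) (abs_nonneg t)
  rw [star_trivial, add_mulVec, dotProduct_add, smul_mulVec, dotProduct_smul, smul_eq_mul]
  nlinarith [neg_abs_le (t * (x ⬝ᵥ M *ᵥ x))]

theorem mul_frobenius_norm_le_of_sylvester [DecidableEq n] {S D E : Matrix n n ℝ} {b : ℝ}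
    (hS : S.PosSemidef) (hD : (D - b • 1).PosSemidef) (hE : E.IsHermitian) :
    b * ‖E‖ ≤ ‖S * E + E * D‖ := by
  have hEsymm : Eᵀ = E := by simpa only [conjTranspose_eq_transpose_of_trivial] using hE.eq
  have htrace : (Eᵀ * (S * E + E * D)).trace
      = (Eᴴ * S * E).trace + (Eᴴ * (D - b • 1) * E).trace + b * ‖E‖ ^ 2 := by
    rw [frobenius_norm_sq_eq_trace, conjTranspose_eq_transpose_of_trivial,
      hEsymm, mul_add, trace_add, trace_mul_comm E (E * D)]
    simp only [Matrix.mul_sub, Matrix.sub_mul, trace_sub, Matrix.mul_smul, Matrix.smul_mul,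
      trace_smul, Matrix.mul_one, mul_assoc, smul_eq_mul]
    ring
  have hrest : 0 ≤ (Eᴴ * S * E).trace + (Eᴴ * (D - b • 1) * E).trace :=
    add_nonneg (hS.conjTranspose_mul_mul_same E).trace_nonneg
      (hD.conjTranspose_mul_mul_same E).trace_nonneg
  have hCS : (Eᵀ * (S * E + E * D)).trace ≤ ‖E‖ * ‖S * E + E * D‖ := by
    rw [trace_transpose_mul_eq_sum]
    exact (le_abs_self _).trans (abs_sum_mul_le_frobenius_norm_mul _ _)
  rcases (norm_nonneg E).eq_or_lt with hE0 | hE0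
  · rw [← hE0, mul_zero]
    exact norm_nonneg _
  · exact le_of_mul_le_mul_right (by nlinarith) hE0

end Matrix

theorem exists_pos_forall_le_of_pos {ι : Type*} [Finite ι] {f : ι → ℝ}
    (hf : ∀ i, 0 < f i) : ∃ c > 0, ∀ i, c ≤ f i := by
  rcases isEmpty_or_nonempty ι with hι | hι
  · exact ⟨1, one_pos, isEmptyElim⟩
  · obtain ⟨i₀, hi₀⟩ := Finite.exists_min f
    exact ⟨f i₀, hf i₀, hi₀⟩

open scoped MatrixOrder in
theorem msqrt_eq_cfcSqrt {K : ℕ} {A : Matrix (Fin K) (Fin K) ℝ} (hA : A.PosSemidef) :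
    msqrt A = CFC.sqrt A := by
  rw [CFC.sqrt_eq_cfc, cfc_nnreal_eq_real _ A hA.nonneg, hA.1.cfc_eq, msqrt, dif_pos hA]
  simp only [IsHermitian.cfc, Unitary.conjStarAlgAut_apply]
  congr 2
  ext a b
  simp only [diagonal_apply, Function.comp_apply, RCLike.ofReal_real_eq_id, id_eq,
    Real.coe_sqrt, Real.coe_toNNReal', max_eq_left (hA.eigenvalues_nonneg _)]

open scoped MatrixOrder in
theorem msqrt_diagonal {K : ℕ} {d : Fin K → ℝ} (hd : ∀ i, 0 ≤ d i) :
    msqrt (diagonal d) = diagonal fun i => √(d i) := by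
  rw [msqrt_eq_cfcSqrt (.diagonal hd)]
  refine CFC.sqrt_unique ?_ (PosSemidef.diagonal fun i => Real.sqrt_nonneg _).nonneg
  rw [diagonal_mul_diagonal]
  exact congrArg _ (funext fun i => Real.mul_self_sqrt (hd i))

open scoped MatrixOrder in
theorem abs_msqrt_diagonal_add_apply_sub_le {K : ℕ} {d : Fin K → ℝ}
    {N : Matrix (Fin K) (Fin K) ℝ} {b : ℝ} (hb : 0 < b) (hbd : ∀ a, b ≤ √(d a))
    (hA : (diagonal d + N).PosSemidef) (i j : Fin K) :
    |(msqrt (diagonal d + N) i j - msqrt (diagonal d) i j) * (√(d i) + √(d j)) - N i j|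
      ≤ (‖N‖ / b) ^ 2 := by
  have hd : ∀ a, 0 ≤ d a := fun a => (Real.sqrt_pos.mp (hb.trans_le (hbd a))).le
  set R : Matrix (Fin K) (Fin K) ℝ := diagonal fun a => √(d a)
  have hRR : R * R = diagonal d := by
    simp only [R, diagonal_mul_diagonal, Real.mul_self_sqrt (hd _)]
  have hRb : (R - b • 1).PosSemidef := by
    rw [smul_one_eq_diagonal, diagonal_sub]
    exact .diagonal fun a => sub_nonneg.mpr (hbd a)
  rw [msqrt_diagonal hd, msqrt_eq_cfcSqrt hA]
  set S := CFC.sqrt (diagonal d + N)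
  have hS : S.PosSemidef := (CFC.sqrt_nonneg _).posSemidef
  set E := S - R
  have hsylv : S * E + E * R = N := by
    calc S * E + E * R = S * S - R * R := by simp only [E]; noncomm_ring
      _ = N := by rw [CFC.sqrt_mul_sqrt_self _ hA.nonneg, hRR, add_sub_cancel_left]
  have hE : ‖E‖ ≤ ‖N‖ / b := by
    rw [le_div_iff₀' hb, ← hsylv]
    exact mul_frobenius_norm_le_of_sylvester hS hRb (hS.1.sub (isHermitian_diagonal _))
  have hentry : E i j * (√(d i) + √(d j)) - N i j = -(E * E) i j := by
    rw [← hsylv, show S = E + R by simp only [E]; abel]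
    simp only [R, Matrix.add_apply, add_mul, mul_diagonal, diagonal_mul]
    ring
  rw [← Matrix.sub_apply, hentry, abs_neg]
  calc |(E * E) i j| ≤ ‖E * E‖ := abs_apply_le_frobenius_norm _ _ _
    _ ≤ ‖E‖ * ‖E‖ := frobenius_norm_mul E E
    _ ≤ (‖N‖ / b) ^ 2 := by rw [sq]; exact mul_self_le_mul_self (norm_nonneg _) hE

theorem abs_msqrt_diagonal_add_smul_apply_div_sub_le {K : ℕ} {d : Fin K → ℝ}
    {M : Matrix (Fin K) (Fin K) ℝ} {c t : ℝ} (hc : 0 < c) (hcd : ∀ a, c ≤ d a)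
    (hA : (diagonal d + t • M).PosSemidef) (ht : t ≠ 0) (i j : Fin K) :
    |(msqrt (diagonal d + t • M) i j - msqrt (diagonal d) i j) / t - M i j / (√(d i) + √(d j))|
      ≤ |t| * (‖M‖ ^ 2 / (c * (√(d i) + √(d j)))) := by
  have hbound := abs_msqrt_diagonal_add_apply_sub_le (Real.sqrt_pos.2 hc)
    (fun a => Real.sqrt_le_sqrt (hcd a)) hA i j
  rw [norm_smul, Real.norm_eq_abs, div_pow, Real.sq_sqrt hc.le, Matrix.smul_apply, smul_eq_mul]
    at hbound
  set x := msqrt (diagonal d + t • M) i j - msqrt (diagonal d) i j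
  set s := √(d i) + √(d j)
  have hs : 0 < s := add_pos_of_pos_of_nonneg (Real.sqrt_pos.2 (hc.trans_le (hcd i)))
    (Real.sqrt_nonneg _)
  have hx : x / t - M i j / s = (x * s - t * M i j) / (t * s) := by field_simp
  rw [hx, abs_div, abs_mul, abs_of_pos hs, div_le_iff₀ (by positivity)]
  calc |x * s - t * M i j| ≤ (|t| * ‖M‖) ^ 2 / c := hbound
    _ = |t| * (‖M‖ ^ 2 / (c * s)) * (|t| * s) := by field_simp

theorem stmt8 (K : ℕ)
    (d : Fin K → ℝ) (hd : ∀ i, 0 < d i)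
    (M : Matrix (Fin K) (Fin K) ℝ) (hM : M.IsHermitian) :
    ∃ t₀ : ℝ, 0 < t₀ ∧
      (∀ t : ℝ, |t| < t₀ → (Matrix.diagonal d + t • M).PosDef) ∧
      (∀ i j : Fin K,
        Tendsto
          (fun t : ℝ =>
            ((msqrt (Matrix.diagonal d + t • M)) i j - (msqrt (Matrix.diagonal d)) i j) / t)
          (nhdsWithin 0 {(0 : ℝ)}ᶜ)
          (nhds (M i j / (Real.sqrt (d i) + Real.sqrt (d j))))) := by
  obtain ⟨c, hc, hcd⟩ := exists_pos_forall_le_of_pos hd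
  have ht₀ : 0 < c / (‖M‖ + 1) := by positivity
  have hPD : ∀ t : ℝ, |t| < c / (‖M‖ + 1) → (diagonal d + t • M).PosDef := fun t ht =>
    posDef_diagonal_add_smul hM hcd <| by
      rw [lt_div_iff₀ (by positivity)] at ht
      nlinarith [abs_nonneg t]
  refine ⟨_, ht₀, hPD, fun i j => ?_⟩
  rw [← tendsto_sub_nhds_zero_iff]
  refine squeeze_zero_norm' (a := fun t => |t| * (‖M‖ ^ 2 / (c * (√(d i) + √(d j))))) ?_ ?_
  · filter_upwards [self_mem_nhdsWithin, nhdsWithin_le_nhds (Metric.ball_mem_nhds 0 ht₀)]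
      with t (ht0 : t ≠ 0) ht
    rw [Metric.mem_ball, dist_zero_right, Real.norm_eq_abs] at ht
    exact abs_msqrt_diagonal_add_smul_apply_div_sub_le hc hcd (hPD t ht).posSemidef ht0 i j
  · exact ((continuous_abs.mul continuous_const).tendsto' 0 0 (by simp)).mono_left
      nhdsWithin_le_nhds
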